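/- arXiv:2507.18781 — 3 statements merged into one kernel-verified Lean document; each statement's English description precedes it below -/
import Mathlib

section
/- If f ∈ E(W), i.e. Sf extends continuously to the closed unit ball of W, then f has linear growth: there exists M > 0 such that |f(ξ)| ≤ M(1 + |ξ|) for all ξ ∈ W, and the strong recession function f^∞(ξ) = lim_{ξ'→ξ, t→∞} f(tξ')/t exists for every ξ ∈ W, with f^∞(ξ) = |ξ| · \overline{Sf}(ξ/|ξ|) for ξ ≠ 0, where \overline{Sf} denotes the continuous extension of Sf to the closed unit ball. -/
open Filter

/-- If f ∈ E(W), i.e. f is continuous and `Sf` extends to a continuous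
function g on the closed unit ball, then f has linear growth and the strong recession
function (joint limit of `f(tξ')/t` as ξ' → ξ, t → ∞) exists for every ξ and equals
`‖ξ‖ · g(ξ/‖ξ‖)` for ξ ≠ 0. -/
theorem stmt9 {W : Type*} [NormedAddCommGroup W] [NormedSpace ℝ W]
    [FiniteDimensional ℝ W]
    (f : W → ℝ) (hf : Continuous f)
    (g : W → ℝ) (hg : ContinuousOn g (Metric.closedBall (0 : W) 1))
    (hext : ∀ ξhat : W, ‖ξhat‖ < 1 →
      g ξhat = (1 - ‖ξhat‖) * f ((1 - ‖ξhat‖)⁻¹ • ξhat)) :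
    (∃ M : ℝ, 0 < M ∧ ∀ ξ, |f ξ| ≤ M * (1 + ‖ξ‖)) ∧
    (∀ ξ : W, ∃ Lξ : ℝ,
      Filter.Tendsto (fun p : W × ℝ => f (p.2 • p.1) / p.2)
        ((nhds ξ) ×ˢ Filter.atTop) (nhds Lξ)) ∧
    (∀ ξ : W, ξ ≠ 0 →
      Filter.Tendsto (fun p : W × ℝ => f (p.2 • p.1) / p.2)
        ((nhds ξ) ×ˢ Filter.atTop) (nhds (‖ξ‖ * g (‖ξ‖⁻¹ • ξ)))) := by
  obtain ⟨C, hC⟩ := (isCompact_closedBall (0 : W) 1).exists_bound_of_continuousOn hg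
  -- key reconstruction formula
  have key : ∀ ξ : W, f ξ = (1 + ‖ξ‖) * g ((1 + ‖ξ‖)⁻¹ • ξ) := by
    intro ξ
    have ha : (0:ℝ) < 1 + ‖ξ‖ := by positivity
    have hnorm : ‖(1 + ‖ξ‖)⁻¹ • ξ‖ = ‖ξ‖ / (1 + ‖ξ‖) := by
      rw [norm_smul, Real.norm_eq_abs, abs_of_pos (inv_pos.mpr ha)]
      ring
    have hlt : ‖(1 + ‖ξ‖)⁻¹ • ξ‖ < 1 := by
      rw [hnorm, div_lt_one ha]; linarith
    have h1 : 1 - ‖(1 + ‖ξ‖)⁻¹ • ξ‖ = (1 + ‖ξ‖)⁻¹ := by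
      rw [hnorm]; field_simp; ring
    have h2 := hext _ hlt
    rw [h1, inv_inv, smul_smul, mul_inv_cancel₀ ha.ne', one_smul] at h2
    rw [h2]
    field_simp
  -- linear growth
  have hball : ∀ ξ : W, (1 + ‖ξ‖)⁻¹ • ξ ∈ Metric.closedBall (0:W) 1 := by
    intro ξ
    have ha : (0:ℝ) < 1 + ‖ξ‖ := by positivity
    rw [Metric.mem_closedBall, dist_zero_right, norm_smul, Real.norm_eq_abs,
      abs_of_pos (inv_pos.mpr ha)]
    rw [inv_mul_le_iff₀ ha]
    linarith
  have growth : ∀ ξ, |f ξ| ≤ (|C| + 1) * (1 + ‖ξ‖) := by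
    intro ξ
    have ha : (0:ℝ) < 1 + ‖ξ‖ := by positivity
    have hb := hC _ (hball ξ)
    rw [Real.norm_eq_abs] at hb
    rw [key ξ, abs_mul, abs_of_pos ha]
    have : |g ((1 + ‖ξ‖)⁻¹ • ξ)| ≤ |C| + 1 := le_trans hb (by
      have := le_abs_self C; linarith)
    nlinarith [abs_nonneg (g ((1 + ‖ξ‖)⁻¹ • ξ))]
  -- eventual positivity of the time variable
  have hpos : ∀ ξ : W, ∀ᶠ p : W × ℝ in (nhds ξ) ×ˢ Filter.atTop, 0 < p.2 := by
    intro ξ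
    have h : ∀ᶠ t : ℝ in Filter.atTop, 0 < t :=
      Filter.eventually_atTop.2 ⟨1, fun t ht => lt_of_lt_of_le one_pos ht⟩
    exact h.prod_inr _
  -- algebraic identity for the quotient
  have eq1 : ∀ p : W × ℝ, 0 < p.2 →
      f (p.2 • p.1) / p.2 = (p.2⁻¹ + ‖p.1‖) * g ((p.2⁻¹ + ‖p.1‖)⁻¹ • p.1) := by
    intro p hp
    have hh : (0:ℝ) < p.2⁻¹ + ‖p.1‖ :=
      add_pos_of_pos_of_nonneg (inv_pos.mpr hp) (norm_nonneg _)
    have hnorm : ‖p.2 • p.1‖ = p.2 * ‖p.1‖ := by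
      rw [norm_smul, Real.norm_eq_abs, abs_of_pos hp]
    have h2 : 1 + ‖p.2 • p.1‖ = (p.2⁻¹ + ‖p.1‖) * p.2 := by
      rw [hnorm, add_mul, inv_mul_cancel₀ hp.ne']; ring
    have h3 : (1 + ‖p.2 • p.1‖)⁻¹ • (p.2 • p.1) = (p.2⁻¹ + ‖p.1‖)⁻¹ • p.1 := by
      rw [h2, smul_smul]
      congr 1
      rw [mul_inv, mul_assoc, inv_mul_cancel₀ hp.ne', mul_one]
    rw [key (p.2 • p.1), h3, h2, mul_assoc, mul_comm p.2 (g _), ← mul_assoc,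
      mul_div_assoc, div_self hp.ne', mul_one]
  -- convergence of the scalar factor
  have hhtend : ∀ ξ : W, Filter.Tendsto (fun p : W × ℝ => p.2⁻¹ + ‖p.1‖)
      ((nhds ξ) ×ˢ Filter.atTop) (nhds ‖ξ‖) := by
    intro ξ
    have := (tendsto_inv_atTop_zero.comp Filter.tendsto_snd).add
      (((continuous_norm).tendsto ξ).comp Filter.tendsto_fst)
    simpa using this
  -- main limit for ξ ≠ 0
  have main : ∀ ξ : W, ξ ≠ 0 →
      Filter.Tendsto (fun p : W × ℝ => f (p.2 • p.1) / p.2)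
        ((nhds ξ) ×ˢ Filter.atTop) (nhds (‖ξ‖ * g (‖ξ‖⁻¹ • ξ))) := by
    intro ξ hξ
    have hn : (0:ℝ) < ‖ξ‖ := norm_pos_iff.mpr hξ
    have hinv : Filter.Tendsto (fun p : W × ℝ => (p.2⁻¹ + ‖p.1‖)⁻¹)
        ((nhds ξ) ×ˢ Filter.atTop) (nhds ‖ξ‖⁻¹) := (hhtend ξ).inv₀ hn.ne'
    have hsm : Filter.Tendsto (fun p : W × ℝ => (p.2⁻¹ + ‖p.1‖)⁻¹ • p.1)
        ((nhds ξ) ×ˢ Filter.atTop) (nhds (‖ξ‖⁻¹ • ξ)) := hinv.smul Filter.tendsto_fst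
    have hmem : ∀ᶠ p : W × ℝ in (nhds ξ) ×ˢ Filter.atTop,
        (p.2⁻¹ + ‖p.1‖)⁻¹ • p.1 ∈ Metric.closedBall (0:W) 1 := by
      filter_upwards [hpos ξ] with p hp
      have hh : (0:ℝ) < p.2⁻¹ + ‖p.1‖ :=
        add_pos_of_pos_of_nonneg (inv_pos.mpr hp) (norm_nonneg _)
      rw [Metric.mem_closedBall, dist_zero_right, norm_smul, Real.norm_eq_abs,
        abs_of_pos (inv_pos.mpr hh)]
      calc (p.2⁻¹ + ‖p.1‖)⁻¹ * ‖p.1‖ ≤ (p.2⁻¹ + ‖p.1‖)⁻¹ * (p.2⁻¹ + ‖p.1‖) := by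
            gcongr
            exact le_add_of_nonneg_left (inv_pos.mpr hp).le
        _ = 1 := inv_mul_cancel₀ hh.ne'
    have humem : ‖ξ‖⁻¹ • ξ ∈ Metric.closedBall (0:W) 1 := by
      rw [Metric.mem_closedBall, dist_zero_right, norm_smul, Real.norm_eq_abs,
        abs_of_pos (inv_pos.mpr hn), inv_mul_cancel₀ hn.ne']
    have hsm' : Filter.Tendsto (fun p : W × ℝ => (p.2⁻¹ + ‖p.1‖)⁻¹ • p.1)
        ((nhds ξ) ×ˢ Filter.atTop) (nhdsWithin (‖ξ‖⁻¹ • ξ) (Metric.closedBall (0:W) 1)) :=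
      tendsto_nhdsWithin_of_tendsto_nhds_of_eventually_within _ hsm hmem
    have hgcomp : Filter.Tendsto (fun p : W × ℝ => g ((p.2⁻¹ + ‖p.1‖)⁻¹ • p.1))
        ((nhds ξ) ×ˢ Filter.atTop) (nhds (g (‖ξ‖⁻¹ • ξ))) :=
      (hg _ humem).tendsto.comp hsm'
    refine Filter.Tendsto.congr' ?_ ((hhtend ξ).mul hgcomp)
    filter_upwards [hpos ξ] with p hp
    exact (eq1 p hp).symm
  -- limit at ξ = 0 is 0
  have zero : Filter.Tendsto (fun p : W × ℝ => f (p.2 • p.1) / p.2)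
      ((nhds (0:W)) ×ˢ Filter.atTop) (nhds 0) := by
    have hb : Filter.Tendsto (fun p : W × ℝ => (|C| + 1) * (p.2⁻¹ + ‖p.1‖))
        ((nhds (0:W)) ×ˢ Filter.atTop) (nhds 0) := by
      have := (hhtend 0).const_mul (|C| + 1)
      simpa using this
    apply squeeze_zero_norm' ?_ hb
    filter_upwards [hpos 0] with p hp
    have hh : (0:ℝ) < p.2⁻¹ + ‖p.1‖ :=
      add_pos_of_pos_of_nonneg (inv_pos.mpr hp) (norm_nonneg _)
    have hg2 := growth (p.2 • p.1)
    rw [norm_smul, Real.norm_eq_abs, abs_of_pos hp] at hg2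
    rw [Real.norm_eq_abs, abs_div, abs_of_pos hp, div_le_iff₀ hp]
    calc |f (p.2 • p.1)| ≤ (|C| + 1) * (1 + p.2 * ‖p.1‖) := hg2
      _ = (|C| + 1) * (p.2⁻¹ + ‖p.1‖) * p.2 := by
          have e : (p.2⁻¹ + ‖p.1‖) * p.2 = 1 + p.2 * ‖p.1‖ := by
            rw [add_mul, inv_mul_cancel₀ hp.ne']; ring
          rw [mul_assoc, e]
  refine ⟨⟨|C| + 1, by positivity, growth⟩, ?_, main⟩
  intro ξ
  by_cases h : ξ = 0
  · exact ⟨0, h ▸ zero⟩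
  · exact ⟨_, main ξ h⟩
end

section
/- For f ∈ E(W), the identity f(ξ) = (1 + |ξ|)·(Sf)(ξ/(1 + |ξ|)) holds for all ξ ∈ W, and there exists a modulus of continuity ω (depending only on the uniform continuity of Sf on the closed ball) such that |f(ξ) − f(η)| ≤ ω(|ξ − η|/(1+|ξ|+|η|)) (1 + |ξ| + |η|); in particular every f ∈ E(W) is continuous with linear growth. -/
/-!
With `ξ̂ = ξ / (1 + ‖ξ‖)` one has `1 - ‖ξ̂‖ = 1 / (1 + ‖ξ‖)`, so evaluating the defining relation
of `g` at `ξ̂` gives `f ξ = (1 + ‖ξ‖) g(ξ̂)`. The map `ξ ↦ ξ̂` contracts distances by the factor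
`4 / (1 + ‖ξ‖ + ‖η‖)`, and `g` is bounded and uniformly continuous on the compact closed unit ball.
Writing `f ξ - f η = (1 + ‖ξ‖)(g ξ̂ - g η̂) + (‖ξ‖ - ‖η‖) g η̂` then gives the weighted modulus
estimate, and `|f ξ| = (1 + ‖ξ‖) |g ξ̂|` the linear growth.
-/

open Metric Filter Topology

section ModulusOn

variable {α : Type*} [MetricSpace α] (g : α → ℝ) (s : Set α)

/-- For `t < 0` no pair qualifies, and `sSup ∅ = 0`. -/
noncomputable def modulusOn (t : ℝ) : ℝ :=
  sSup {r | ∃ x ∈ s, ∃ y ∈ s, dist x y ≤ t ∧ r = |g x - g y|}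

theorem modulusOn_nonneg (t : ℝ) : 0 ≤ modulusOn g s t :=
  Real.sSup_nonneg <| by
    rintro r ⟨x, -, y, -, -, rfl⟩
    exact abs_nonneg _

theorem modulusOn_zero : modulusOn g s 0 = 0 := by
  refine le_antisymm (Real.sSup_le ?_ le_rfl) (modulusOn_nonneg g s 0)
  rintro r ⟨x, -, y, -, hxy, rfl⟩
  rw [dist_le_zero.1 hxy, sub_self, abs_zero]

variable {g s}

theorem bddAbove_modulusOn_set (hs : IsCompact s) (hg : ContinuousOn g s) (t : ℝ) :
    BddAbove {r | ∃ x ∈ s, ∃ y ∈ s, dist x y ≤ t ∧ r = |g x - g y|} := by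
  obtain ⟨C, hC⟩ := hs.exists_bound_of_continuousOn hg
  refine ⟨C + C, ?_⟩
  rintro r ⟨x, hx, y, hy, -, rfl⟩
  exact (abs_sub _ _).trans (add_le_add (hC x hx) (hC y hy))

theorem abs_sub_le_modulusOn (hs : IsCompact s) (hg : ContinuousOn g s) {x y : α}
    (hx : x ∈ s) (hy : y ∈ s) {t : ℝ} (ht : dist x y ≤ t) : |g x - g y| ≤ modulusOn g s t :=
  le_csSup (bddAbove_modulusOn_set hs hg t) ⟨x, hx, y, hy, ht, rfl⟩

theorem monotone_modulusOn (hs : IsCompact s) (hg : ContinuousOn g s) :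
    Monotone (modulusOn g s) := by
  intro t u htu
  refine Real.sSup_le ?_ (modulusOn_nonneg g s u)
  rintro r ⟨x, hx, y, hy, hxy, rfl⟩
  exact abs_sub_le_modulusOn hs hg hx hy (hxy.trans htu)

theorem continuousAt_modulusOn_zero (hs : IsCompact s) (hg : ContinuousOn g s) :
    ContinuousAt (modulusOn g s) 0 := by
  rw [ContinuousAt, modulusOn_zero, Metric.tendsto_nhds]
  intro ε hε
  obtain ⟨δ, hδ, hgδ⟩ := Metric.uniformContinuousOn_iff.1
    (hs.uniformContinuousOn_of_continuous hg) (ε / 2) (half_pos hε)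
  filter_upwards [Iio_mem_nhds hδ] with t ht
  rw [Real.dist_eq, sub_zero, abs_of_nonneg (modulusOn_nonneg g s t)]
  refine (Real.sSup_le ?_ (half_pos hε).le).trans_lt (half_lt_self hε)
  rintro r ⟨x, hx, y, hy, hxy, rfl⟩
  exact (hgδ x hx y hy (hxy.trans_lt ht)).le

end ModulusOn

section RadialCompression

variable {E : Type*} [NormedAddCommGroup E] [NormedSpace ℝ E]

theorem norm_inv_one_add_norm_smul (ξ : E) :
    ‖(1 + ‖ξ‖)⁻¹ • ξ‖ = ‖ξ‖ / (1 + ‖ξ‖) := by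
  rw [norm_smul, norm_inv, Real.norm_of_nonneg (by positivity), inv_mul_eq_div]

theorem norm_inv_one_add_norm_smul_lt_one (ξ : E) : ‖(1 + ‖ξ‖)⁻¹ • ξ‖ < 1 := by
  rw [norm_inv_one_add_norm_smul, div_lt_one (by positivity)]
  exact lt_one_add _

theorem one_sub_norm_inv_one_add_norm_smul (ξ : E) :
    1 - ‖(1 + ‖ξ‖)⁻¹ • ξ‖ = (1 + ‖ξ‖)⁻¹ := by
  rw [norm_inv_one_add_norm_smul]
  field_simp
  ring

theorem inv_one_add_norm_smul_mem_closedBall (ξ : E) :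
    (1 + ‖ξ‖)⁻¹ • ξ ∈ closedBall (0 : E) 1 :=
  mem_closedBall_zero_iff.2 (norm_inv_one_add_norm_smul_lt_one ξ).le

theorem norm_inv_one_add_norm_smul_sub_le (ξ η : E) :
    ‖(1 + ‖ξ‖)⁻¹ • ξ - (1 + ‖η‖)⁻¹ • η‖ ≤ 2 * ‖ξ - η‖ / (1 + ‖ξ‖) := by
  set a := 1 + ‖ξ‖
  set b := 1 + ‖η‖
  have ha : 0 < a := by positivity
  have hb : 0 < b := by positivity
  have hba : |b - a| ≤ ‖ξ - η‖ := by
    simpa only [a, b, add_sub_add_left_eq_sub, norm_sub_rev ξ η] using abs_norm_sub_norm_le η ξ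
  -- the second term is small because `‖η‖ ≤ b`
  have hsecond : |a⁻¹ - b⁻¹| * ‖η‖ ≤ ‖ξ - η‖ / a := by
    rw [inv_sub_inv ha.ne' hb.ne', abs_div, abs_of_pos (mul_pos ha hb), div_mul_eq_mul_div,
      div_le_div_iff₀ (mul_pos ha hb) ha]
    calc |b - a| * ‖η‖ * a ≤ ‖ξ - η‖ * b * a := by gcongr; linarith
      _ = ‖ξ - η‖ * (a * b) := by ring
  calc ‖a⁻¹ • ξ - b⁻¹ • η‖ = ‖a⁻¹ • (ξ - η) + (a⁻¹ - b⁻¹) • η‖ := by congr 1; module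
    _ ≤ ‖a⁻¹ • (ξ - η)‖ + ‖(a⁻¹ - b⁻¹) • η‖ := norm_add_le _ _
    _ = ‖ξ - η‖ / a + |a⁻¹ - b⁻¹| * ‖η‖ := by
      rw [norm_smul, norm_smul, norm_inv, Real.norm_of_nonneg ha.le, Real.norm_eq_abs,
        inv_mul_eq_div]
    _ ≤ 2 * ‖ξ - η‖ / a := by rw [mul_div_assoc, two_mul]; gcongr

theorem dist_inv_one_add_norm_smul_le (ξ η : E) :
    dist ((1 + ‖ξ‖)⁻¹ • ξ) ((1 + ‖η‖)⁻¹ • η) ≤ 4 * (‖ξ - η‖ / (1 + ‖ξ‖ + ‖η‖)) := by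
  rw [dist_eq_norm]
  have hs : 0 < 1 + ‖ξ‖ + ‖η‖ := by positivity
  rcases le_total ‖η‖ ‖ξ‖ with h | h
  · refine (norm_inv_one_add_norm_smul_sub_le ξ η).trans ?_
    rw [mul_div_assoc', div_le_div_iff₀ (by positivity) hs]
    nlinarith [norm_nonneg (ξ - η)]
  · rw [norm_sub_rev]
    refine (norm_inv_one_add_norm_smul_sub_le η ξ).trans ?_
    rw [norm_sub_rev, mul_div_assoc', div_le_div_iff₀ (by positivity) hs]
    nlinarith [norm_nonneg (ξ - η)]

end RadialCompression

theorem abs_sub_le_modulusOn_closedBall {E : Type*} [NormedAddCommGroup E] [NormedSpace ℝ E]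
    [ProperSpace E] {f g : E → ℝ} (hg : ContinuousOn g (closedBall (0 : E) 1))
    (hfg : ∀ ξ : E, f ξ = (1 + ‖ξ‖) * g ((1 + ‖ξ‖)⁻¹ • ξ)) {M : ℝ}
    (hM : ∀ x ∈ closedBall (0 : E) 1, |g x| ≤ M) (ξ η : E) :
    |f ξ - f η| ≤ (modulusOn g (closedBall 0 1) (4 * (‖ξ - η‖ / (1 + ‖ξ‖ + ‖η‖))) +
      M * (‖ξ - η‖ / (1 + ‖ξ‖ + ‖η‖))) * (1 + ‖ξ‖ + ‖η‖) := by
  set a := 1 + ‖ξ‖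
  set b := 1 + ‖η‖
  set s := 1 + ‖ξ‖ + ‖η‖
  set t := ‖ξ - η‖ / s
  have ha : 0 < a := by positivity
  have has : a ≤ s := le_add_of_nonneg_right (norm_nonneg η)
  have hts : t * s = ‖ξ - η‖ := div_mul_cancel₀ _ (by positivity)
  have hab : |a - b| ≤ ‖ξ - η‖ := by
    simpa only [a, b, add_sub_add_left_eq_sub] using abs_norm_sub_norm_le ξ η
  have hmod : |g (a⁻¹ • ξ) - g (b⁻¹ • η)| ≤ modulusOn g (closedBall 0 1) (4 * t) :=
    abs_sub_le_modulusOn (isCompact_closedBall 0 1) hg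
      (inv_one_add_norm_smul_mem_closedBall ξ) (inv_one_add_norm_smul_mem_closedBall η)
      (dist_inv_one_add_norm_smul_le ξ η)
  have hgη : |g (b⁻¹ • η)| ≤ M := hM _ (inv_one_add_norm_smul_mem_closedBall η)
  rw [hfg ξ, hfg η]
  calc |a * g (a⁻¹ • ξ) - b * g (b⁻¹ • η)|
      = |a * (g (a⁻¹ • ξ) - g (b⁻¹ • η)) + (a - b) * g (b⁻¹ • η)| := by ring_nf
    _ ≤ a * |g (a⁻¹ • ξ) - g (b⁻¹ • η)| + |a - b| * |g (b⁻¹ • η)| :=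
      (abs_add_le _ _).trans_eq (by rw [abs_mul, abs_mul, abs_of_pos ha])
    _ ≤ s * modulusOn g (closedBall 0 1) (4 * t) + ‖ξ - η‖ * M := by gcongr
    _ = (modulusOn g (closedBall 0 1) (4 * t) + M * t) * s := by rw [← hts]; ring

theorem stmt10_general {W : Type*} [NormedAddCommGroup W] [NormedSpace ℝ W]
    [FiniteDimensional ℝ W]
    (f : W → ℝ)
    (g : W → ℝ) (hg : ContinuousOn g (Metric.closedBall (0 : W) 1))
    (hext : ∀ ξhat : W, ‖ξhat‖ < 1 →
      g ξhat = (1 - ‖ξhat‖) * f ((1 - ‖ξhat‖)⁻¹ • ξhat)) :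
    (∀ ξ : W, f ξ = (1 + ‖ξ‖) * g ((1 + ‖ξ‖)⁻¹ • ξ)) ∧
    (∃ ω : ℝ → ℝ, Monotone ω ∧ ω 0 = 0 ∧ ContinuousAt ω 0 ∧
      ∀ ξ η : W, |f ξ - f η| ≤
        ω (‖ξ - η‖ / (1 + ‖ξ‖ + ‖η‖)) * (1 + ‖ξ‖ + ‖η‖)) ∧
    (∃ M : ℝ, 0 < M ∧ ∀ ξ, |f ξ| ≤ M * (1 + ‖ξ‖)) := by
  have hK : IsCompact (closedBall (0 : W) 1) := isCompact_closedBall 0 1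
  have hfg : ∀ ξ : W, f ξ = (1 + ‖ξ‖) * g ((1 + ‖ξ‖)⁻¹ • ξ) := fun ξ => by
    have h1 : (1 + ‖ξ‖) ≠ 0 := by positivity
    rw [hext _ (norm_inv_one_add_norm_smul_lt_one ξ), one_sub_norm_inv_one_add_norm_smul, inv_inv,
      smul_smul, mul_inv_cancel₀ h1, one_smul, ← mul_assoc, mul_inv_cancel₀ h1, one_mul]
  obtain ⟨C, hC⟩ := hK.exists_bound_of_continuousOn hg
  set M := max C 1
  have hM : ∀ x ∈ closedBall (0 : W) 1, |g x| ≤ M := fun x hx => (hC x hx).trans (le_max_left _ _)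
  have hωcont : ContinuousAt (fun t => modulusOn g (closedBall 0 1) (4 * t) + M * t) 0 :=
    ((continuousAt_modulusOn_zero hK hg).comp_of_eq (continuousAt_const.mul continuousAt_id)
      (mul_zero 4)).add (continuousAt_const.mul continuousAt_id)
  refine ⟨hfg, ⟨_, fun t u htu => ?_, by simp [modulusOn_zero], hωcont,
    abs_sub_le_modulusOn_closedBall hg hfg hM⟩, M, lt_max_of_lt_right one_pos, fun ξ => ?_⟩
  · have hM0 : 0 ≤ M := zero_le_one.trans (le_max_right _ _)
    exact add_le_add (monotone_modulusOn hK hg (by linarith)) (by gcongr)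
  · rw [hfg ξ, abs_mul, abs_of_pos (by positivity), mul_comm]
    gcongr
    exact hM _ (inv_one_add_norm_smul_mem_closedBall ξ)

/-- For f ∈ E(W) (with continuous extension g of Sf to the closed ball),
`f(ξ) = (1+‖ξ‖)·(Sf)(ξ/(1+‖ξ‖))`, there is a modulus of continuity ω with
`|f(ξ) - f(η)| ≤ ω(‖ξ-η‖/(1+‖ξ‖+‖η‖))(1+‖ξ‖+‖η‖)`, and f has linear growth. -/
theorem stmt10 {W : Type*} [NormedAddCommGroup W] [NormedSpace ℝ W]
    [FiniteDimensional ℝ W]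
    (f : W → ℝ) (hf : Continuous f)
    (g : W → ℝ) (hg : ContinuousOn g (Metric.closedBall (0 : W) 1))
    (hext : ∀ ξhat : W, ‖ξhat‖ < 1 →
      g ξhat = (1 - ‖ξhat‖) * f ((1 - ‖ξhat‖)⁻¹ • ξhat)) :
    (∀ ξ : W, f ξ = (1 + ‖ξ‖) * g ((1 + ‖ξ‖)⁻¹ • ξ)) ∧
    (∃ ω : ℝ → ℝ, Monotone ω ∧ ω 0 = 0 ∧ ContinuousAt ω 0 ∧
      ∀ ξ η : W, |f ξ - f η| ≤
        ω (‖ξ - η‖ / (1 + ‖ξ‖ + ‖η‖)) * (1 + ‖ξ‖ + ‖η‖)) ∧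
    (∃ M : ℝ, 0 < M ∧ ∀ ξ, |f ξ| ≤ M * (1 + ‖ξ‖)) :=
  stmt10_general f g hg hext
end

section
/- With g as defined via g(a,b) = min{f₁(a)f₂(b₁) + f₁^min f₂^∞(b₂) : b₁+b₂ = b}, the function b ↦ g(a,b) is convex for each fixed a, and its recession function satisfies g^∞(a, b) = f₁^min f₂^∞(b) for every a ∈ V and b ∈ ℝ^l. -/
/-!
Write `m = inf f₁` and `f₂^∞` for the recession function of `f₂`. Convexity of `f₂` gives
`f₂ (x + v) ≤ f₂ x + f₂^∞ v`, so every term `f₁(a) f₂(c) + m f₂^∞(tb - c)` of the infimum is at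
least `m f₂(tb)`, while the choice `c = 0` bounds the infimum by `f₁(a) f₂(0) + t m f₂^∞(b)`.
Dividing by `t` squeezes `g(a, tb)/t` to `m f₂^∞(b)`. Convexity of `g(a, ·)` is that of an
infimal convolution of two convex functions that are bounded below.
-/

open Set Filter Topology

section Recession

variable {E : Type*} [AddCommGroup E] [Module ℝ E] {f r : E → ℝ}

def IsRecessionFunction (f r : E → ℝ) : Prop :=
  ∀ b, Tendsto (fun t : ℝ => f (t • b) / t) atTop (𝓝 (r b))

namespace IsRecessionFunction

theorem map_smul_of_pos (hr : IsRecessionFunction f r) {s : ℝ} (hs : 0 < s) (b : E) :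
    r (s • b) = s * r b := by
  have hlim : Tendsto (fun t : ℝ => s * (f ((t * s) • b) / (t * s))) atTop (𝓝 (s * r b)) :=
    ((hr b).comp (tendsto_id.atTop_mul_const hs)).const_mul s
  refine tendsto_nhds_unique (hr (s • b)) (hlim.congr' ?_)
  filter_upwards [eventually_gt_atTop 0] with t ht
  rw [smul_smul]
  field_simp

theorem nonneg (hr : IsRecessionFunction f r) (hf : 0 ≤ f) : 0 ≤ r := fun b =>
  ge_of_tendsto (hr b) <| by
    filter_upwards [eventually_gt_atTop 0] with t ht
    exact div_nonneg (hf _) ht.le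

theorem convexOn (hr : IsRecessionFunction f r) (hf : ConvexOn ℝ univ f) :
    ConvexOn ℝ univ r := by
  refine ⟨convex_univ, fun u _ w _ θ σ hθ hσ hθσ => ?_⟩
  refine le_of_tendsto_of_tendsto (hr _) (((hr u).const_mul θ).add ((hr w).const_mul σ)) ?_
  filter_upwards [eventually_gt_atTop 0] with t ht
  have hconv := hf.2 (mem_univ (t • u)) (mem_univ (t • w)) hθ hσ hθσ
  rw [smul_add, smul_comm t θ, smul_comm t σ]
  calc f (θ • t • u + σ • t • w) / t ≤ (θ • f (t • u) + σ • f (t • w)) / t := by gcongr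
    _ = θ * (f (t • u) / t) + σ * (f (t • w) / t) := by simp only [smul_eq_mul]; ring

end IsRecessionFunction

/-- Writing `x + v = (1 - 1/t) x + (1/2t) (2x) + (1/2t) (2t v)`, convexity bounds `f (x + v)` by a
quantity tending to `f x + r v`. -/
theorem ConvexOn.le_add_recession (hf : ConvexOn ℝ univ f) (hr : IsRecessionFunction f r)
    (x v : E) : f (x + v) ≤ f x + r v := by
  have hbound : ∀ t : ℝ, 1 ≤ t →
      f (x + v) ≤ (1 - t⁻¹) * f x + (2 * t)⁻¹ * f ((2 : ℝ) • x) + f ((2 * t) • v) / (2 * t) := by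
    intro t ht
    have ht0 : 0 < t := one_pos.trans_le ht
    have hsplit : x + v = (1 - t⁻¹) • x + t⁻¹ • (x + t • v) := by
      rw [smul_add, smul_smul, inv_mul_cancel₀ ht0.ne', sub_smul, one_smul, one_smul]
      abel
    have hmid : x + t • v = (2⁻¹ : ℝ) • ((2 : ℝ) • x) + (2⁻¹ : ℝ) • ((2 * t) • v) := by
      rw [smul_smul, smul_smul, inv_mul_cancel₀ two_ne_zero, ← mul_assoc,
        inv_mul_cancel₀ two_ne_zero, one_smul, one_mul]
    have h₁ := hf.2 (mem_univ x) (mem_univ (x + t • v))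
      (sub_nonneg.2 (inv_le_one_of_one_le₀ ht)) (inv_nonneg.2 ht0.le) (sub_add_cancel 1 t⁻¹)
    have h₂ := hf.2 (mem_univ ((2 : ℝ) • x)) (mem_univ ((2 * t) • v))
      (by norm_num : (0 : ℝ) ≤ 2⁻¹) (by norm_num : (0 : ℝ) ≤ 2⁻¹) (by norm_num)
    rw [← hsplit] at h₁
    rw [← hmid] at h₂
    simp only [smul_eq_mul] at h₁ h₂
    calc f (x + v) ≤ (1 - t⁻¹) * f x + t⁻¹ * f (x + t • v) := h₁
      _ ≤ (1 - t⁻¹) * f x + t⁻¹ * (2⁻¹ * f ((2 : ℝ) • x) + 2⁻¹ * f ((2 * t) • v)) := by gcongr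
      _ = _ := by field_simp; ring
  have h2t : Tendsto (fun t : ℝ => 2 * t) atTop atTop := tendsto_id.const_mul_atTop two_pos
  have hlim : Tendsto (fun t : ℝ => (1 - t⁻¹) * f x + (2 * t)⁻¹ * f ((2 : ℝ) • x)
      + f ((2 * t) • v) / (2 * t)) atTop (𝓝 ((1 - 0) * f x + 0 * f ((2 : ℝ) • x) + r v)) :=
    (((tendsto_inv_atTop_zero.const_sub 1).mul_const _).add
      ((tendsto_inv_atTop_zero.comp h2t).mul_const _)).add ((hr v).comp h2t)
  simp only [sub_zero, one_mul, zero_mul, add_zero] at hlim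
  exact ge_of_tendsto hlim (eventually_ge_atTop 1 |>.mono hbound)

end Recession

section InfConvolution

variable {E : Type*} [AddCommGroup E] {φ ψ : E → ℝ}

noncomputable def infConv (φ ψ : E → ℝ) (b : E) : ℝ :=
  ⨅ c, φ c + ψ (b - c)

theorem bddBelow_range_add_sub (hφ : BddBelow (range φ)) (hψ : BddBelow (range ψ)) (b : E) :
    BddBelow (range fun c => φ c + ψ (b - c)) := by
  obtain ⟨M, hM⟩ := hφ
  obtain ⟨N, hN⟩ := hψ
  exact ⟨M + N, by rintro _ ⟨c, rfl⟩; exact add_le_add (hM ⟨c, rfl⟩) (hN ⟨b - c, rfl⟩)⟩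

theorem infConv_le (hφ : BddBelow (range φ)) (hψ : BddBelow (range ψ)) (b c : E) :
    infConv φ ψ b ≤ φ c + ψ (b - c) :=
  ciInf_le (bddBelow_range_add_sub hφ hψ b) c

theorem ConvexOn.infConv [Module ℝ E] (hφ : ConvexOn ℝ univ φ) (hψ : ConvexOn ℝ univ ψ)
    (hφb : BddBelow (range φ)) (hψb : BddBelow (range ψ)) :
    ConvexOn ℝ univ (infConv φ ψ) := by
  refine ⟨convex_univ, fun x _ y _ θ σ hθ hσ hθσ => ?_⟩
  unfold _root_.infConv
  rw [smul_eq_mul, smul_eq_mul, Real.mul_iInf_of_nonneg hθ, Real.mul_iInf_of_nonneg hσ]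
  refine le_ciInf_add_ciInf fun c₁ c₂ => ?_
  have hsub : θ • x + σ • y - (θ • c₁ + σ • c₂) = θ • (x - c₁) + σ • (y - c₂) := by
    simp only [smul_sub]; abel
  have hφc := hφ.2 (mem_univ c₁) (mem_univ c₂) hθ hσ hθσ
  have hψc := hψ.2 (mem_univ (x - c₁)) (mem_univ (y - c₂)) hθ hσ hθσ
  rw [← hsub] at hψc
  simp only [smul_eq_mul] at hφc hψc
  calc ⨅ c, φ c + ψ (θ • x + σ • y - c)
      ≤ φ (θ • c₁ + σ • c₂) + ψ (θ • x + σ • y - (θ • c₁ + σ • c₂)) :=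
        infConv_le hφb hψb _ _
    _ ≤ θ * (φ c₁ + ψ (x - c₁)) + σ * (φ c₂ + ψ (y - c₂)) := by linarith

theorem tendsto_infConv_smul_div_atTop [Module ℝ E] {f r : E → ℝ} (hf : ConvexOn ℝ univ f)
    (hf₀ : 0 ≤ f) (hr : IsRecessionFunction f r) {α β : ℝ} (hβ : 0 ≤ β) (hβα : β ≤ α) (b : E) :
    Tendsto (fun t : ℝ => infConv (fun c => α * f c) (fun v => β * r v) (t • b) / t) atTop
      (𝓝 (β * r b)) := by
  have hαf : BddBelow (range fun c => α * f c) :=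
    ⟨0, forall_mem_range.2 fun c => mul_nonneg (hβ.trans hβα) (hf₀ c)⟩
  have hβr : BddBelow (range fun v => β * r v) :=
    ⟨0, forall_mem_range.2 fun v => mul_nonneg hβ (hr.nonneg hf₀ v)⟩
  have hupper : Tendsto (fun t : ℝ => α * f 0 * t⁻¹ + β * r b) atTop (𝓝 (β * r b)) := by
    simpa using (tendsto_inv_atTop_zero.const_mul (α * f 0)).add_const (β * r b)
  refine tendsto_of_tendsto_of_tendsto_of_le_of_le' ((hr b).const_mul β) hupper ?_ ?_
  all_goals filter_upwards [eventually_gt_atTop 0] with t ht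
  · rw [← mul_div_assoc]
    gcongr
    refine le_ciInf fun c => ?_
    calc β * f (t • b) ≤ β * (f c + r (t • b - c)) := by
          gcongr
          simpa using hf.le_add_recession hr c (t • b - c)
      _ ≤ α * f c + β * r (t • b - c) := by
          linarith [mul_le_mul_of_nonneg_right hβα (hf₀ c)]
  · calc infConv (fun c => α * f c) (fun v => β * r v) (t • b) / t
        ≤ (α * f 0 + β * r (t • b - 0)) / t := by gcongr; exact infConv_le hαf hβr _ 0
      _ = α * f 0 * t⁻¹ + β * r b := by
          rw [sub_zero, hr.map_smul_of_pos ht]; field_simp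

end InfConvolution

theorem stmt14_general {l : ℕ} {V : Type*}
    (f₁ : V → ℝ)
    (C₁ C₂ : ℝ) (hC₁ : 0 < C₁)
    (hf₁b : ∀ a, C₁ ≤ f₁ a ∧ f₁ a ≤ C₂)
    (f₂ : EuclideanSpace ℝ (Fin l) → ℝ)
    (hf₂conv : ConvexOn ℝ Set.univ f₂)
    (K : ℝ) (hK : 0 < K)
    (hf₂b : ∀ b, K⁻¹ * ‖b‖ ≤ f₂ b ∧ f₂ b ≤ K * (1 + ‖b‖))
    (f₂inf : EuclideanSpace ℝ (Fin l) → ℝ)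
    (hf₂inf : ∀ b, Filter.Tendsto (fun t : ℝ => f₂ (t • b) / t)
      Filter.atTop (nhds (f₂inf b))) :
    (∀ a : V, ConvexOn ℝ Set.univ (fun b : EuclideanSpace ℝ (Fin l) =>
      ⨅ c : EuclideanSpace ℝ (Fin l),
        (f₁ a * f₂ c + (⨅ a' : V, f₁ a') * f₂inf (b - c)))) ∧
    (∀ (a : V) (b : EuclideanSpace ℝ (Fin l)),
      Filter.Tendsto
        (fun t : ℝ =>
          (⨅ c : EuclideanSpace ℝ (Fin l),
            (f₁ a * f₂ c + (⨅ a' : V, f₁ a') * f₂inf (t • b - c))) / t)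
        Filter.atTop (nhds ((⨅ a' : V, f₁ a') * f₂inf b))) := by
  set m := ⨅ a' : V, f₁ a'
  have hm₀ : 0 ≤ m := Real.iInf_nonneg fun a' => hC₁.le.trans (hf₁b a').1
  have hm_le : ∀ a, m ≤ f₁ a := ciInf_le ⟨C₁, forall_mem_range.2 fun a' => (hf₁b a').1⟩
  have hf₂₀ : 0 ≤ f₂ := fun b =>
    (mul_nonneg (inv_nonneg.2 hK.le) (norm_nonneg b)).trans (hf₂b b).1
  have hf₂r : IsRecessionFunction f₂ f₂inf := hf₂inf
  refine ⟨fun a => ?_, fun a b =>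
    tendsto_infConv_smul_div_atTop hf₂conv hf₂₀ hf₂r hm₀ (hm_le a) b⟩
  have hf₁a : 0 ≤ f₁ a := hm₀.trans (hm_le a)
  exact (hf₂conv.smul hf₁a).infConv ((hf₂r.convexOn hf₂conv).smul hm₀)
    ⟨0, forall_mem_range.2 fun c => mul_nonneg hf₁a (hf₂₀ c)⟩
    ⟨0, forall_mem_range.2 fun v => mul_nonneg hm₀ (hf₂r.nonneg hf₂₀ v)⟩

/-- With `g(a,b) = inf { f₁(a) f₂(b₁) + f₁^min f₂^∞(b - b₁) }` (an infimal
convolution), the function `b ↦ g(a,b)` is convex for each a, and its recession function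
satisfies `g^∞(a,b) = lim_{t→∞} g(a, tb)/t = f₁^min f₂^∞(b)`. -/
theorem stmt14 {l : ℕ} {V : Type*} [NormedAddCommGroup V] [NormedSpace ℝ V]
    [FiniteDimensional ℝ V]
    (f₁ : V → ℝ) (hf₁c : Continuous f₁)
    (C₁ C₂ : ℝ) (hC₁ : 0 < C₁) (hC₁₂ : C₁ ≤ C₂)
    (hf₁b : ∀ a, C₁ ≤ f₁ a ∧ f₁ a ≤ C₂)
    (f₂ : EuclideanSpace ℝ (Fin l) → ℝ)
    (hf₂conv : ConvexOn ℝ Set.univ f₂)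
    (K : ℝ) (hK : 0 < K)
    (hf₂b : ∀ b, K⁻¹ * ‖b‖ ≤ f₂ b ∧ f₂ b ≤ K * (1 + ‖b‖))
    (f₂inf : EuclideanSpace ℝ (Fin l) → ℝ)
    (hf₂inf : ∀ b, Filter.Tendsto (fun t : ℝ => f₂ (t • b) / t)
      Filter.atTop (nhds (f₂inf b))) :
    (∀ a : V, ConvexOn ℝ Set.univ (fun b : EuclideanSpace ℝ (Fin l) =>
      ⨅ c : EuclideanSpace ℝ (Fin l),
        (f₁ a * f₂ c + (⨅ a' : V, f₁ a') * f₂inf (b - c)))) ∧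
    (∀ (a : V) (b : EuclideanSpace ℝ (Fin l)),
      Filter.Tendsto
        (fun t : ℝ =>
          (⨅ c : EuclideanSpace ℝ (Fin l),
            (f₁ a * f₂ c + (⨅ a' : V, f₁ a') * f₂inf (t • b - c))) / t)
        Filter.atTop (nhds ((⨅ a' : V, f₁ a') * f₂inf b))) :=
  stmt14_general f₁ C₁ C₂ hC₁ hf₁b f₂ hf₂conv K hK hf₂b f₂inf hf₂inf
end
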